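/- Let φ be a hyperbolic automorphism of D and let c ∈ D. Then ∑_{n=0}^∞ (1 − |φ^[n](c)|) < ∞; that is, the orbit (φ^[n](c)) is a Blaschke sequence. -/

import Mathlib

/-- A (holomorphic) automorphism of the open unit disc `D = {z : |z| < 1}`:
a map of the form `z ↦ λ(z − a)/(1 − conj(a)·z)` with `a ∈ D` and `|λ| = 1`. -/
def IsDiscAut (φ : ℂ → ℂ) : Prop :=
  ∃ a lam : ℂ, ‖a‖ < 1 ∧ ‖lam‖ = 1 ∧
    ∀ z : ℂ, φ z = lam * (z - a) / (1 - (starRingEnd ℂ) a * z)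

/-- An elliptic automorphism: `φ ≠ id` with a fixed point in the open disc. -/
def IsEllipticAut (φ : ℂ → ℂ) : Prop :=
  IsDiscAut φ ∧ φ ≠ id ∧ ∃ a : ℂ, ‖a‖ < 1 ∧ φ a = a

/-- A parabolic automorphism: `φ ≠ id` with exactly one fixed point in the closed disc,
lying on the unit circle. -/
def IsParabolicAut (φ : ℂ → ℂ) : Prop :=
  IsDiscAut φ ∧ φ ≠ id ∧ ∃ w : ℂ, ‖w‖ = 1 ∧
    {z : ℂ | ‖z‖ ≤ 1 ∧ φ z = z} = {w}

/-- A hyperbolic automorphism: `φ ≠ id` with exactly two fixed points in the closed disc,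
both on the unit circle. -/
def IsHyperbolicAut (φ : ℂ → ℂ) : Prop :=
  IsDiscAut φ ∧ φ ≠ id ∧ ∃ w₁ w₂ : ℂ, w₁ ≠ w₂ ∧
    ‖w₁‖ = 1 ∧ ‖w₂‖ = 1 ∧
    {z : ℂ | ‖z‖ ≤ 1 ∧ φ z = z} = {w₁, w₂}

/-- The parabolic automorphism `φ_c(z) = (1 + c − 2z)/(2c − (1 + c)z)` fixing `1`. -/
noncomputable def phiC (c : ℂ) : ℂ → ℂ := fun z => (1 + c - 2 * z) / (2 * c - (1 + c) * z)

/-- The hyperbolic automorphism `ψ_r(z) = (z − r)/(1 − r z)` fixing `−1` and `1`. -/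
noncomputable def psiR (r : ℝ) : ℂ → ℂ := fun z => (z - (r : ℂ)) / (1 - (r : ℂ) * z)

/-!
Conjugating by the boundary fixed points `w₁, w₂` linearises `φ z = λ (z - a) / (1 - ā z)`:
`(φ z - w₁) / (φ z - w₂) = k · (z - w₁) / (z - w₂)` with `k = (λ + ā w₁) / (λ + ā w₂)`.
The numbers `p = ā w₁`, `q = ā w₂` are the roots of `X² + (λ - 1) X - λ |a|²`, and `λ + p = 1 - q`;
if `|1 - p| = |1 - q|` the roots would be conjugate, forcing `λ = -1` and `Re p = 1`, impossible
since `|p| = |a| < 1`. So `|k| ≠ 1`, the orbit converges geometrically to one of the fixed points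
`w`, and `1 - |z| ≤ |z - w|` dominates the Blaschke series by a geometric one.
-/

open Complex ComplexConjugate Set Metric Function

theorem iterate_cross_ratio {K : Type*} [Field K] {f d : K → K} {S : Set K} {w₁ w₂ k₁ k₂ : K}
    (hf : MapsTo f S S) (hd : ∀ z ∈ S, d z ≠ 0)
    (h₁ : ∀ z ∈ S, (f z - w₁) * d z = k₁ * (z - w₁))
    (h₂ : ∀ z ∈ S, (f z - w₂) * d z = k₂ * (z - w₂)) {z : K} (hz : z ∈ S) (n : ℕ) :
    k₂ ^ n * (f^[n] z - w₁) * (z - w₂) = k₁ ^ n * (z - w₁) * (f^[n] z - w₂) := by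
  induction n with
  | zero => simp only [iterate_zero_apply]; ring
  | succ n ih =>
    have hn := hf.iterate n hz
    rw [iterate_succ_apply']
    apply mul_right_cancel₀ (hd _ hn)
    linear_combination (k₂ ^ (n + 1) * (z - w₂)) * h₁ _ hn
      - (k₁ ^ (n + 1) * (z - w₁)) * h₂ _ hn + (k₁ * k₂) * ih

theorem summable_norm_sub_of_cross_ratio {𝕜 : Type*} [NormedField 𝕜] {u : ℕ → 𝕜}
    {z w₁ w₂ k₁ k₂ : 𝕜} {B : ℝ}
    (h : ∀ n, k₂ ^ n * (u n - w₁) * (z - w₂) = k₁ ^ n * (z - w₁) * (u n - w₂))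
    (hk : ‖k₁‖ < ‖k₂‖) (hz : z ≠ w₂) (hB : ∀ n, ‖u n - w₂‖ ≤ B) :
    Summable fun n => ‖u n - w₁‖ := by
  have hk₂ : 0 < ‖k₂‖ := (norm_nonneg _).trans_lt hk
  have hz₂ : 0 < ‖z - w₂‖ := norm_pos_iff.2 (sub_ne_zero.2 hz)
  have hr : ‖k₁‖ / ‖k₂‖ < 1 := (div_lt_one hk₂).2 hk
  refine ((summable_geometric_of_lt_one (by positivity) hr).mul_left
    (B * ‖z - w₁‖ / ‖z - w₂‖)).of_nonneg_of_le (fun _ => norm_nonneg _) fun n => ?_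
  have hn := congrArg norm (h n)
  simp only [norm_mul, norm_pow] at hn
  rw [div_pow, mul_div_assoc', div_mul_eq_mul_div, div_div, le_div_iff₀ (by positivity)]
  calc ‖u n - w₁‖ * (‖z - w₂‖ * ‖k₂‖ ^ n) = ‖k₁‖ ^ n * ‖z - w₁‖ * ‖u n - w₂‖ := by
        rw [← hn]; ring
    _ ≤ ‖k₁‖ ^ n * ‖z - w₁‖ * B := by gcongr; exact hB n
    _ = B * ‖z - w₁‖ * ‖k₁‖ ^ n := by ring

theorem summable_one_sub_norm_of_summable_norm_sub {E : Type*} [SeminormedAddCommGroup E]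
    {u : ℕ → E} {w : E} (hw : ‖w‖ = 1) (hu : Summable fun n => ‖u n - w‖) :
    Summable fun n => 1 - ‖u n‖ :=
  hu.of_norm_bounded fun n => by
    rw [Real.norm_eq_abs, ← hw, norm_sub_rev (u n)]
    exact abs_norm_sub_norm_le w (u n)

theorem summable_one_sub_norm_iterate {f d : ℂ → ℂ} {w₁ w₂ k₁ k₂ : ℂ}
    (hf : MapsTo f (ball 0 1) (ball 0 1)) (hd : ∀ z ∈ ball 0 1, d z ≠ 0)
    (h₁ : ∀ z ∈ ball 0 1, (f z - w₁) * d z = k₁ * (z - w₁))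
    (h₂ : ∀ z ∈ ball 0 1, (f z - w₂) * d z = k₂ * (z - w₂))
    (hw₁ : ‖w₁‖ = 1) (hw₂ : ‖w₂‖ = 1) (hk : ‖k₁‖ < ‖k₂‖) {c : ℂ} (hc : c ∈ ball 0 1) :
    Summable fun n => 1 - ‖f^[n] c‖ := by
  have hcw₂ : c ≠ w₂ := by
    rintro rfl
    simp [hw₂] at hc
  have hB (n : ℕ) : ‖f^[n] c - w₂‖ ≤ 2 := by
    have := mem_ball_zero_iff.1 (hf.iterate n hc)
    linarith [norm_sub_le (f^[n] c) w₂]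
  exact summable_one_sub_norm_of_summable_norm_sub hw₁ <|
    summable_norm_sub_of_cross_ratio (iterate_cross_ratio hf hd h₁ h₂ hc) hk hcw₂ hB

theorem one_sub_conj_mul_ne_zero {a z : ℂ} (ha : ‖a‖ < 1) (hz : ‖z‖ ≤ 1) :
    1 - conj a * z ≠ 0 := by
  have : ‖conj a * z‖ < 1 := by
    rw [norm_mul, RCLike.norm_conj]
    nlinarith [norm_nonneg a, norm_nonneg z]
  exact sub_ne_zero.2 fun h => by rw [← h, norm_one] at this; exact this.false

theorem normSq_one_sub_conj_mul_sub_normSq_sub (a z : ℂ) :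
    normSq (1 - conj a * z) - normSq (z - a) = (1 - normSq a) * (1 - normSq z) := by
  simp only [normSq_apply, sub_re, sub_im, mul_re, mul_im, conj_re, conj_im, one_re, one_im]
  ring

theorem norm_mobius_lt_one {a lam z : ℂ} (ha : ‖a‖ < 1) (hlam : ‖lam‖ = 1) (hz : ‖z‖ < 1) :
    ‖lam * (z - a) / (1 - conj a * z)‖ < 1 := by
  have hd := norm_pos_iff.2 (one_sub_conj_mul_ne_zero ha hz.le)
  rw [norm_div, norm_mul, hlam, one_mul, div_lt_one hd, ← sq_lt_sq₀ (norm_nonneg _) hd.le,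
    Complex.sq_norm, Complex.sq_norm, ← sub_pos, normSq_one_sub_conj_mul_sub_normSq_sub,
    ← Complex.sq_norm, ← Complex.sq_norm]
  exact mul_pos (sub_pos.2 (pow_lt_one₀ (norm_nonneg a) ha two_ne_zero))
    (sub_pos.2 (pow_lt_one₀ (norm_nonneg z) hz two_ne_zero))

theorem mobius_sub_mul_of_fixed {a lam w z : ℂ} (hw : lam * (w - a) = w * (1 - conj a * w))
    (hz : 1 - conj a * z ≠ 0) :
    (lam * (z - a) / (1 - conj a * z) - w) * (1 - conj a * z) = (lam + conj a * w) * (z - w) := by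
  rw [sub_mul, div_mul_cancel₀ _ hz]
  linear_combination hw

theorem norm_one_sub_ne_of_mul_eq {p q : ℂ} (hpq : p ≠ q) (hq : ‖q‖ = ‖p‖) (hp : ‖p‖ < 1)
    (hvieta : p * q = (p + q - 1) * (‖p‖ ^ 2 : ℝ)) : ‖1 - p‖ ≠ ‖1 - q‖ := by
  intro h
  have hsq (z : ℂ) : ‖z‖ ^ 2 = z.re ^ 2 + z.im ^ 2 := by rw [Complex.sq_norm, normSq_apply]; ring
  have e₁ := congrArg (· ^ 2) h
  have e₂ := congrArg (· ^ 2) hq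
  have e₃ := congrArg re hvieta
  simp only [hsq, sub_re, sub_im, one_re, one_im, add_re, mul_re, ofReal_re, ofReal_im] at e₁ e₂ e₃
  have hre : q.re = p.re := by nlinarith
  have him : q.im = -p.im := by
    have : (q.im - p.im) * (q.im + p.im) = 0 := by nlinarith
    refine eq_neg_of_add_eq_zero_left ((mul_eq_zero.1 this).resolve_left fun h' => hpq ?_)
    exact Complex.ext hre.symm (sub_eq_zero.1 h').symm
  have hp₀ : 0 < ‖p‖ := by
    refine norm_pos_iff.2 fun h₀ => hpq ?_
    rw [h₀, norm_zero, norm_eq_zero] at hq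
    rw [h₀, hq]
  rw [hre, him, mul_zero, sub_zero, ← sq, mul_neg, sub_neg_eq_add, ← sq, ← hsq] at e₃
  have hre₁ : p.re = 1 := by
    have := mul_right_cancel₀ (pow_pos hp₀ 2).ne' (e₃.symm.trans (one_mul _).symm)
    linarith
  have := re_le_norm p
  linarith

theorem norm_add_conj_mul_ne_of_fixed {a lam w₁ w₂ : ℂ} (ha : ‖a‖ < 1) (ha₀ : a ≠ 0)
    (hw : w₁ ≠ w₂) (hw₁ : ‖w₁‖ = 1) (hw₂ : ‖w₂‖ = 1)
    (h₁ : lam * (w₁ - a) = w₁ * (1 - conj a * w₁))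
    (h₂ : lam * (w₂ - a) = w₂ * (1 - conj a * w₂)) :
    ‖lam + conj a * w₁‖ ≠ ‖lam + conj a * w₂‖ := by
  have hw' := sub_ne_zero.2 hw
  have hsum : lam = 1 - conj a * w₁ - conj a * w₂ :=
    mul_right_cancel₀ hw' (by linear_combination h₁ - h₂)
  have hprod : lam * a = -(conj a * w₁ * w₂) :=
    mul_right_cancel₀ hw' (by linear_combination w₂ * h₁ - w₁ * h₂)
  have hp : ‖conj a * w₁‖ = ‖a‖ := by rw [norm_mul, RCLike.norm_conj, hw₁, mul_one]
  have hq : ‖conj a * w₂‖ = ‖a‖ := by rw [norm_mul, RCLike.norm_conj, hw₂, mul_one]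
  have hpq : conj a * w₁ ≠ conj a * w₂ :=
    (mul_right_injective₀ ((map_ne_zero _).2 ha₀)).ne hw
  have hvieta : conj a * w₁ * (conj a * w₂)
      = (conj a * w₁ + conj a * w₂ - 1) * (‖conj a * w₁‖ ^ 2 : ℝ) := by
    rw [hp, ofReal_pow, ← conj_mul']
    linear_combination conj a * hprod - conj a * a * hsum
  rw [show lam + conj a * w₁ = 1 - conj a * w₂ by rw [hsum]; ring,
    show lam + conj a * w₂ = 1 - conj a * w₁ by rw [hsum]; ring]
  exact (norm_one_sub_ne_of_mul_eq hpq (hq.trans hp.symm) (hp ▸ ha) hvieta).symm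

/-- For a hyperbolic automorphism `φ` of the disc and `c ∈ D`, the orbit
`(φ^[n] c)` is a Blaschke sequence: `∑ (1 − |φ^[n] c|) < ∞`. -/
theorem stmt_3 (φ : ℂ → ℂ) (hφ : IsHyperbolicAut φ) (c : ℂ) (hc : ‖c‖ < 1) :
    Summable (fun n : ℕ => 1 - ‖φ^[n] c‖) := by
  obtain ⟨⟨a, lam, ha, hlam, hφ⟩, hid, w₁, w₂, hw, hw₁, hw₂, hfix⟩ := hφ
  have hd (z : ℂ) (hz : z ∈ ball 0 1) : 1 - conj a * z ≠ 0 :=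
    one_sub_conj_mul_ne_zero ha (mem_ball_zero_iff.1 hz).le
  have hfixed (w : ℂ) (hw : w ∈ ({w₁, w₂} : Set ℂ)) : lam * (w - a) = w * (1 - conj a * w) := by
    rw [← hfix] at hw
    rw [← div_eq_iff (one_sub_conj_mul_ne_zero ha hw.1), ← hφ, hw.2]
  have ha₀ : a ≠ 0 := by
    rintro rfl
    have hlam₁ : lam = 1 := by
      have h := hfixed w₁ (by simp)
      simp only [sub_zero, map_zero, zero_mul, mul_one] at h
      exact mul_left_eq_self₀.1 h |>.resolve_right (by rintro rfl; simp at hw₁)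
    exact hid (funext fun z => by simp [hφ, hlam₁])
  have hmaps : MapsTo φ (ball 0 1) (ball 0 1) := fun z hz => by
    simpa [hφ] using norm_mobius_lt_one ha hlam (mem_ball_zero_iff.1 hz)
  have hmul (w : ℂ) (hw : w ∈ ({w₁, w₂} : Set ℂ)) (z : ℂ) (hz : z ∈ ball 0 1) :
      (φ z - w) * (1 - conj a * z) = (lam + conj a * w) * (z - w) :=
    hφ z ▸ mobius_sub_mul_of_fixed (hfixed w hw) (hd z hz)
  have hc' : c ∈ ball 0 1 := mem_ball_zero_iff.2 hc
  rcases (norm_add_conj_mul_ne_of_fixed ha ha₀ hw hw₁ hw₂ (hfixed w₁ (by simp))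
    (hfixed w₂ (by simp))).lt_or_gt with hk | hk
  · exact summable_one_sub_norm_iterate hmaps hd (hmul w₁ (by simp)) (hmul w₂ (by simp))
      hw₁ hw₂ hk hc'
  · exact summable_one_sub_norm_iterate hmaps hd (hmul w₂ (by simp)) (hmul w₁ (by simp))
      hw₂ hw₁ hk hc'
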